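/- arXiv:1705.06873 — 5 statements merged into one kernel-verified Lean document; each statement's English description precedes it below -/
import Mathlib

section
/- For every p ∈ (0,1) and every natural number l ≥ 1, Φ_p(l) := ∏_{k=1}^l (1-p)/(1-p+p^{k+1}) satisfies Φ_p(l) ≥ exp(-(p/(1-p))^2). -/
/-!
Writing `x_k = p^(k+1)/(1-p)`, each factor of `Φ_p(l)` is `(1 + x_k)⁻¹ ≥ exp(-x_k)` because
`1 + x ≤ exp x`. Hence `Φ_p(l) ≥ exp(-∑ x_k)`, and the geometric tail bound
`∑_{k ≥ 1} p^(k+1) ≤ p²/(1-p)` gives `∑ x_k ≤ (p/(1-p))²`.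
-/

noncomputable def Phi (p : ℝ) (l : ℕ) : ℝ :=
  ∏ k ∈ Finset.Icc 1 l, (1 - p) / (1 - p + p ^ (k + 1))

open Finset Real

theorem exp_neg_le_inv_one_add {x : ℝ} (hx : 0 ≤ x) : exp (-x) ≤ (1 + x)⁻¹ := by
  rw [exp_neg]
  exact inv_anti₀ (by positivity) (by linarith [add_one_le_exp x])

theorem exp_neg_sum_le_prod_inv_one_add {ι : Type*} (s : Finset ι) {x : ι → ℝ}
    (hx : ∀ i ∈ s, 0 ≤ x i) : exp (-∑ i ∈ s, x i) ≤ ∏ i ∈ s, (1 + x i)⁻¹ := by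
  rw [← sum_neg_distrib, exp_sum]
  exact prod_le_prod (fun i _ => (exp_pos _).le) fun i hi => exp_neg_le_inv_one_add (hx i hi)

theorem sum_Icc_pow_succ_le {p : ℝ} (hp : 0 ≤ p) (hp1 : p < 1) (l : ℕ) :
    ∑ k ∈ Icc 1 l, p ^ (k + 1) ≤ p ^ 2 / (1 - p) := by
  rw [← Ico_add_one_right_eq_Icc, sum_Ico_add' (fun i => p ^ i)]
  exact geom_sum_Ico_le_of_lt_one hp hp1

theorem Phi_eq_prod_inv {p : ℝ} (hp1 : p < 1) (l : ℕ) :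
    Phi p l = ∏ k ∈ Icc 1 l, (1 + p ^ (k + 1) / (1 - p))⁻¹ := by
  refine prod_congr rfl fun k _ => ?_
  have : 1 - p ≠ 0 := by linarith
  field_simp

theorem stmt_1_general (p : ℝ) (hp : 0 < p) (hp1 : p < 1) (l : ℕ) :
    Phi p l ≥ Real.exp (-(p / (1 - p)) ^ 2) := by
  have h1p : 0 < 1 - p := by linarith
  have hsum : ∑ k ∈ Icc 1 l, p ^ (k + 1) / (1 - p) ≤ (p / (1 - p)) ^ 2 := by
    rw [← sum_div, div_pow, sq (1 - p), ← div_div]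
    gcongr
    exact sum_Icc_pow_succ_le hp.le hp1 l
  calc exp (-(p / (1 - p)) ^ 2)
      ≤ exp (-∑ k ∈ Icc 1 l, p ^ (k + 1) / (1 - p)) := exp_le_exp.mpr (by linarith)
    _ ≤ Phi p l := by
      rw [Phi_eq_prod_inv hp1]
      exact exp_neg_sum_le_prod_inv_one_add _ fun k _ => by positivity

theorem stmt_1 (p : ℝ) (hp : 0 < p) (hp1 : p < 1) (l : ℕ) (hl : 1 ≤ l) :
    Phi p l ≥ Real.exp (-(p / (1 - p)) ^ 2) :=
  stmt_1_general p hp hp1 l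
end

section
/- For every p ∈ (0,1) and l ≥ 1, Φ_p(l) ≥ (l/(l + (p/(1-p))^2 · (1 - p^l)))^l. -/
/-!
Each factor of `Φ_p(l)` is the reciprocal of `z_k = 1 + p^(k+1)/(1-p)`, and the `z_k` sum to
`l + (p/(1-p))^2 (1 - p^l)` by the geometric series. AM-GM bounds `∏ z_k` by the `l`-th power of
their mean, and taking reciprocals gives the bound.
-/

open Finset

theorem Finset.prod_le_mean_pow_card {ι : Type*} (s : Finset ι) (z : ι → ℝ)
    (hz : ∀ i ∈ s, 0 ≤ z i) : ∏ i ∈ s, z i ≤ ((∑ i ∈ s, z i) / #s) ^ #s := by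
  rcases s.eq_empty_or_nonempty with rfl | hs
  · simp
  have hcard : (0 : ℝ) < #s := by exact_mod_cast hs.card_pos
  have hprod : 0 ≤ ∏ i ∈ s, z i := prod_nonneg hz
  have amgm := Real.geom_mean_le_arith_mean_weighted s (fun _ => (#s : ℝ)⁻¹) z
    (fun _ _ => by positivity) (by simp [hcard.ne']) hz
  rw [Real.finsetProd_rpow s z hz, ← mul_sum, inv_mul_eq_div] at amgm
  calc ∏ i ∈ s, z i = ((∏ i ∈ s, z i) ^ (#s : ℝ)⁻¹) ^ #s :=
        (Real.rpow_inv_natCast_pow hprod hs.card_pos.ne').symm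
    _ ≤ ((∑ i ∈ s, z i) / #s) ^ #s := by gcongr

theorem Phi_eq_inv_prod {p : ℝ} (hp1 : p ≠ 1) (l : ℕ) :
    Phi p l = (∏ k ∈ Icc 1 l, (1 + p ^ (k + 1) / (1 - p)))⁻¹ := by
  have hq : 1 - p ≠ 0 := sub_ne_zero.2 hp1.symm
  rw [Phi, ← prod_inv_distrib]
  refine prod_congr rfl fun k _ => ?_
  rw [one_add_div hq, inv_div]

theorem sum_Icc_one_add_pow_div {p : ℝ} (hp1 : p ≠ 1) (l : ℕ) :
    ∑ k ∈ Icc 1 l, (1 + p ^ (k + 1) / (1 - p)) = l + (p / (1 - p)) ^ 2 * (1 - p ^ l) := by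
  have hq : 1 - p ≠ 0 := sub_ne_zero.2 hp1.symm
  induction l with
  | zero => simp
  | succ l ih =>
    rw [sum_Icc_succ_top (Nat.le_add_left 1 l), ih]
    push_cast
    field_simp
    ring

theorem stmt_2_general (p : ℝ) (hp : 0 < p) (hp1 : p < 1) (l : ℕ) :
    Phi p l ≥ ((l : ℝ) / ((l : ℝ) + (p / (1 - p)) ^ 2 * (1 - p ^ l))) ^ l := by
  set z : ℕ → ℝ := fun k => 1 + p ^ (k + 1) / (1 - p)
  have hz : ∀ k, 0 < z k := fun k => add_pos one_pos (div_pos (pow_pos hp _) (sub_pos.2 hp1))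
  have hprod : 0 < ∏ k ∈ Icc 1 l, z k := prod_pos fun k _ => hz k
  have amgm := (Icc 1 l).prod_le_mean_pow_card z fun k _ => (hz k).le
  rw [Nat.card_Icc, Nat.add_sub_cancel, sum_Icc_one_add_pow_div hp1.ne] at amgm
  rw [Phi_eq_inv_prod hp1.ne, ge_iff_le, ← inv_div, inv_pow]
  exact inv_anti₀ hprod amgm

theorem stmt_2 (p : ℝ) (hp : 0 < p) (hp1 : p < 1) (l : ℕ) (hl : 1 ≤ l) :
    Phi p l ≥ ((l : ℝ) / ((l : ℝ) + (p / (1 - p)) ^ 2 * (1 - p ^ l))) ^ l :=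
  stmt_2_general p hp hp1 l
end

section
/- For p ∈ (0,1) and real z with 0 < z < 1, the function H_p(z) = ∑_{l≥1} Φ_p(l)^2 z^l satisfies the functional equation (z-1)·H_p(z) = (2p/(1-p))·H_p(pz) + (p/(1-p))^2·H_p(p^2 z) − z. -/
noncomputable def H (p : ℝ) (z : ℝ) : ℝ :=
  ∑' l : ℕ, Phi p (l + 1) ^ 2 * z ^ (l + 1)

section

variable {p : ℝ} (hp : 0 ≤ p) (hp1 : p < 1)
include hp hp1

lemma Phi_nonneg (l : ℕ) : 0 ≤ Phi p l :=
  Finset.prod_nonneg fun k _ => div_nonneg (by linarith) (by positivity)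

lemma Phi_le_one (l : ℕ) : Phi p l ≤ 1 :=
  Finset.prod_le_one (fun k _ => div_nonneg (by linarith) (by positivity))
    fun k _ => div_le_one_of_le₀ (le_add_of_nonneg_right (by positivity)) (by positivity)

lemma Phi_eq_mul_Phi_succ (l : ℕ) :
    Phi p l = (1 + p / (1 - p) * p ^ (l + 1)) * Phi p (l + 1) := by
  have hq : 0 < 1 - p := by linarith
  have hD : 0 < 1 - p + p ^ (l + 2) := by positivity
  rw [Phi, Phi, Finset.prod_Icc_succ_top (by omega)]
  field_simp
  ring

lemma summable_Phi_sq_mul_pow {z : ℝ} (hz : |z| < 1) :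
    Summable fun l => Phi p l ^ 2 * z ^ l := by
  refine Summable.of_norm_bounded (summable_geometric_of_lt_one (abs_nonneg z) hz) fun l => ?_
  rw [norm_mul, norm_pow, norm_pow, Real.norm_eq_abs, Real.norm_eq_abs,
    abs_of_nonneg (Phi_nonneg hp hp1 l)]
  exact mul_le_of_le_one_left (by positivity) <| pow_le_one₀ (Phi_nonneg hp hp1 l) (Phi_le_one hp hp1 l)

lemma hasSum_H {z : ℝ} (hz : |z| < 1) :
    HasSum (fun l => Phi p (l + 1) ^ 2 * z ^ (l + 1)) (H p z) :=
  ((summable_nat_add_iff 1).mpr (summable_Phi_sq_mul_pow hp hp1 hz)).hasSum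

lemma hasSum_Phi_sq_mul_pow {z : ℝ} (hz : |z| < 1) :
    HasSum (fun l => Phi p l ^ 2 * z ^ l) (1 + H p z) := by
  refine (hasSum_nat_add_iff' 1).mp ?_
  simpa [Phi] using hasSum_H hp hp1 hz

end

theorem stmt_7 (p : ℝ) (hp : 0 < p) (hp1 : p < 1) (z : ℝ) (hz0 : 0 < z) (hz1 : z < 1) :
    (z - 1) * H p z = (2 * p / (1 - p)) * H p (p * z)
      + (p / (1 - p)) ^ 2 * H p (p ^ 2 * z) - z := by
  have hz : |z| < 1 := by rw [abs_of_pos hz0]; exact hz1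
  have hpz : |p * z| < 1 := by rw [abs_of_pos (by positivity)]; nlinarith
  have hp2z : |p ^ 2 * z| < 1 := by rw [abs_of_pos (by positivity)]; nlinarith
  have hdiff : HasSum (fun l => Phi p l ^ 2 * z ^ (l + 1) - Phi p (l + 1) ^ 2 * z ^ (l + 1))
      (z * (1 + H p z) - H p z) := by
    refine HasSum.sub ?_ (hasSum_H hp.le hp1 hz)
    simpa only [pow_succ, mul_assoc, mul_comm z] using
      (hasSum_Phi_sq_mul_pow hp.le hp1 hz).mul_right z
  have hrhs : HasSum (fun l => Phi p l ^ 2 * z ^ (l + 1) - Phi p (l + 1) ^ 2 * z ^ (l + 1))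
      ((2 * p / (1 - p)) * H p (p * z) + (p / (1 - p)) ^ 2 * H p (p ^ 2 * z)) := by
    refine (((hasSum_H hp.le hp1 hpz).mul_left (2 * p / (1 - p))).add
      ((hasSum_H hp.le hp1 hp2z).mul_left ((p / (1 - p)) ^ 2))).congr_fun fun l => ?_
    rw [Phi_eq_mul_Phi_succ hp.le hp1 l]
    ring
  linear_combination hdiff.unique hrhs
end

section
/- For p ∈ (0,1) and t ≥ 0, with S_p(t) = ∑_{k=0}^t p^k and any integer l' ≥ 1: ∑_{m≥0} ∑_{l=1}^{m+l'} p^{m+l}(1-p)^{2+m} (m+1) C(m+l', l) S_p(t)^l = ((1-p)/(1-p+p^{t+3}))^2 · S_p(t+1)^{l'} − ((1-p)/(1-p+p^2))^2. -/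
noncomputable def S (p : ℝ) (t : ℕ) : ℝ := ∑ k ∈ Finset.range (t + 1), p ^ k

lemma aux_binom (y : ℝ) (n : ℕ) :
    ∑ l ∈ Finset.Icc 1 n, (n.choose l : ℝ) * y ^ l = (1 + y) ^ n - 1 := by
  have h : (y + 1) ^ n = ∑ k ∈ Finset.range (n + 1), y ^ k * 1 ^ (n - k) * (n.choose k : ℝ) :=
    add_pow y 1 n
  have hIcc : Finset.Icc 1 n = (Finset.range (n + 1)).erase 0 := by
    ext x; simp [Nat.lt_succ_iff]; omega
  rw [hIcc, Finset.sum_erase_eq_sub (show 0 ∈ Finset.range (n + 1) by simp)]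
  simp only [one_pow, mul_one] at h
  have h' : ∑ k ∈ Finset.range (n + 1), (n.choose k : ℝ) * y ^ k = (1 + y) ^ n := by
    rw [show (1 + y) = (y + 1) by ring, h]
    exact Finset.sum_congr rfl (fun k _ => by ring)
  rw [h']
  simp

lemma aux_hasSum (r : ℝ) (h : |r| < 1) :
    HasSum (fun m : ℕ => ((m : ℝ) + 1) * r ^ m) (1 / (1 - r) ^ 2) := by
  have hr : ‖r‖ < 1 := by rwa [Real.norm_eq_abs]
  have h1 := hasSum_coe_mul_geometric_of_norm_lt_one hr
  have h2 := hasSum_geometric_of_norm_lt_one hr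
  have h3 := h1.add h2
  have hne : (1 - r) ≠ 0 := by
    intro hh
    have : r = 1 := by linarith
    rw [this] at h; norm_num at h
  have : r / (1 - r) ^ 2 + (1 - r)⁻¹ = 1 / (1 - r) ^ 2 := by
    field_simp; ring
  rw [this] at h3
  convert h3 using 2 with m
  · rfl
  ring

theorem stmt_16 (p : ℝ) (hp : 0 < p) (hp1 : p < 1) (t : ℕ) (l' : ℕ) (hl' : 1 ≤ l') :
    ∑' m : ℕ, ∑ l ∈ Finset.Icc 1 (m + l'),
        p ^ (m + l) * (1 - p) ^ (2 + m) * (m + 1) * (Nat.choose (m + l') l) * S p t ^ l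
      = ((1 - p) / (1 - p + p ^ (t + 3))) ^ 2 * S p (t + 1) ^ l'
        - ((1 - p) / (1 - p + p ^ 2)) ^ 2 := by
  have hp1' : p ≠ 1 := ne_of_lt hp1
  have h1p : (0:ℝ) < 1 - p := by linarith
  set A := S p (t + 1) with hA
  -- A = 1 + p * S p t
  have hA1 : A = 1 + p * S p t := by
    rw [hA]
    unfold S
    rw [Finset.sum_range_succ' (fun k => p ^ k) (t + 1)]
    rw [Finset.mul_sum]
    simp [pow_succ, mul_comm, add_comm]
  -- (1 - p) * A = 1 - p ^ (t + 2)
  have hgeom : (1 - p) * A = 1 - p ^ (t + 2) := by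
    have h := geom_sum_mul p (t + 2)
    rw [hA]
    unfold S
    linear_combination -h
  set r1 := p * (1 - p) * A with hr1
  set r2 := p * (1 - p) with hr2
  have hr1eq : r1 = p - p ^ (t + 3) := by
    rw [hr1, mul_assoc, hgeom]
    have : p ^ (t + 3) = p * p ^ (t + 2) := by ring
    rw [this]; ring
  have hptpos : 0 < p ^ (t + 2) := pow_pos hp _
  have hptle : p ^ (t + 2) ≤ 1 := pow_le_one₀ (le_of_lt hp) (le_of_lt hp1)
  have hr1abs : |r1| < 1 := by
    rw [hr1eq, abs_lt]
    constructor
    · nlinarith [pow_pos hp (t + 3), (pow_le_one₀ (le_of_lt hp) (le_of_lt hp1) : p ^ (t + 3) ≤ 1)]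
    · nlinarith [pow_pos hp (t + 3)]
  have hr2abs : |r2| < 1 := by
    rw [hr2, abs_lt]
    constructor <;> nlinarith
  have hd1 : 1 - r1 = 1 - p + p ^ (t + 3) := by rw [hr1eq]; ring
  have hd2 : 1 - r2 = 1 - p + p ^ 2 := by rw [hr2]; ring
  -- rewrite each term
  have key : ∀ m : ℕ,
      (∑ l ∈ Finset.Icc 1 (m + l'),
        p ^ (m + l) * (1 - p) ^ (2 + m) * (m + 1) * (Nat.choose (m + l') l) * S p t ^ l)
      = ((1 - p) ^ 2 * A ^ l') * (((m : ℝ) + 1) * r1 ^ m)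
        - (1 - p) ^ 2 * (((m : ℝ) + 1) * r2 ^ m) := by
    intro m
    have hsum : ∑ l ∈ Finset.Icc 1 (m + l'),
        p ^ (m + l) * (1 - p) ^ (2 + m) * (m + 1) * (Nat.choose (m + l') l) * S p t ^ l
      = p ^ m * (1 - p) ^ (2 + m) * ((m : ℝ) + 1)
          * (∑ l ∈ Finset.Icc 1 (m + l'), ((m + l').choose l : ℝ) * (p * S p t) ^ l) := by
      rw [Finset.mul_sum]
      refine Finset.sum_congr rfl (fun l _ => ?_)
      rw [pow_add, mul_pow]
      ring
    rw [hsum, aux_binom, ← hA1]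
    have hAm : A ^ (m + l') = A ^ m * A ^ l' := pow_add A m l'
    rw [hAm, hr1, hr2]
    rw [pow_add (1 - p) 2 m, mul_pow, mul_pow]
    ring
  have hs1 := (aux_hasSum r1 hr1abs).mul_left ((1 - p) ^ 2 * A ^ l')
  have hs2 := (aux_hasSum r2 hr2abs).mul_left ((1 - p) ^ 2)
  have htot := hs1.sub hs2
  have := htot.tsum_eq
  rw [tsum_congr key, this, hd1, hd2]
  have hd1ne : (1 - p + p ^ (t + 3)) ≠ 0 := by positivity
  have hd2ne : (1 - p + p ^ 2) ≠ 0 := by positivity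
  field_simp
end

section
/- For p ∈ (0,1): β_p(1) = (p/(1-p))·Φ_p(2)^2·(1 − p^2(1-p)(1-p^2)), where β_p(1) = ∑_{m≥0} ∑_{l=1}^{m+1} p^{m+l}(1-p)^{3+m}(m+1)·C(m+1, l) and Φ_p(2) = ((1-p)/(1-p+p^2))·((1-p)/(1-p+p^3)). -/
open Finset

theorem hasSum_succ_mul_geometric {𝕜 : Type*} [NormedDivisionRing 𝕜] [HasSummableGeomSeries 𝕜]
    {r : 𝕜} (hr : ‖r‖ < 1) : HasSum (fun n : ℕ ↦ (n + 1) * r ^ n) (1 / (1 - r) ^ 2) := by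
  simpa using hasSum_choose_mul_geometric_of_norm_lt_one 1 hr

theorem sum_Icc_one_pow_mul_choose {R : Type*} [CommRing R] (x : R) (n : ℕ) :
    ∑ l ∈ Icc 1 n, x ^ l * n.choose l = (1 + x) ^ n - 1 := by
  rw [add_comm, add_pow, range_eq_Ico, sum_eq_sum_Ico_succ_bot (by omega : 0 < n + 1), zero_add,
    Ico_add_one_right_eq_Icc]
  simp

theorem sum_Icc_pow_mul_choose_eq {R : Type*} [CommRing R] (p : R) (m : ℕ) :
    ∑ l ∈ Icc 1 (m + 1), p ^ (m + l) * (1 - p) ^ (3 + m) * (m + 1) * (m + 1).choose l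
      = (1 - p) ^ 3 * (1 + p) * ((m + 1) * (p * (1 - p) * (1 + p)) ^ m)
        - (1 - p) ^ 3 * ((m + 1) * (p * (1 - p)) ^ m) := by
  have factor : ∑ l ∈ Icc 1 (m + 1), p ^ (m + l) * (1 - p) ^ (3 + m) * (m + 1) * (m + 1).choose l
      = p ^ m * (1 - p) ^ (3 + m) * (m + 1) * ∑ l ∈ Icc 1 (m + 1), p ^ l * (m + 1).choose l := by
    rw [mul_sum]
    exact sum_congr rfl fun l _ ↦ by ring
  rw [factor, sum_Icc_one_pow_mul_choose]
  simp only [mul_pow, pow_add, pow_succ]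
  ring

theorem hasSum_sum_Icc_pow_mul_choose {p : ℝ} (hp : 0 < p) (hp1 : p < 1) :
    HasSum (fun m : ℕ ↦ ∑ l ∈ Icc 1 (m + 1),
        p ^ (m + l) * (1 - p) ^ (3 + m) * (m + 1) * (m + 1).choose l)
      ((1 - p) ^ 3 * (1 + p) / (1 - p + p ^ 3) ^ 2 - (1 - p) ^ 3 / (1 - p + p ^ 2) ^ 2) := by
  have hq : 0 < 1 - p := sub_pos.2 hp1
  have ha : ‖p * (1 - p) * (1 + p)‖ < 1 := by
    rw [Real.norm_of_nonneg (by positivity)]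
    nlinarith [pow_pos hp 3]
  have hb : ‖p * (1 - p)‖ < 1 := by
    rw [Real.norm_of_nonneg (by positivity)]
    nlinarith
  have key := ((hasSum_succ_mul_geometric ha).mul_left ((1 - p) ^ 3 * (1 + p))).sub
    ((hasSum_succ_mul_geometric hb).mul_left ((1 - p) ^ 3))
  rw [show 1 - p * (1 - p) * (1 + p) = 1 - p + p ^ 3 by ring,
    show 1 - p * (1 - p) = 1 - p + p ^ 2 by ring] at key
  simp_rw [sum_Icc_pow_mul_choose_eq]
  simpa only [mul_one_div] using key

theorem Phi_two (p : ℝ) : Phi p 2 = (1 - p) / (1 - p + p ^ 2) * ((1 - p) / (1 - p + p ^ 3)) := by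
  rw [Phi, show Icc 1 2 = {1, 2} from rfl, prod_pair (by norm_num)]

theorem stmt_18 (p : ℝ) (hp : 0 < p) (hp1 : p < 1) :
    (∑' m : ℕ, ∑ l ∈ Finset.Icc 1 (m + 1),
        p ^ (m + l) * (1 - p) ^ (3 + m) * (m + 1) * (Nat.choose (m + 1) l))
      = (p / (1 - p)) * Phi p 2 ^ 2 * (1 - p ^ 2 * (1 - p) * (1 - p ^ 2)) := by
  have hq : 1 - p ≠ 0 := (sub_pos.2 hp1).ne'
  have h2 : 1 - p + p ^ 2 ≠ 0 := by nlinarith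
  have h3 : 1 - p + p ^ 3 ≠ 0 := by nlinarith [pow_pos hp 3]
  rw [(hasSum_sum_Icc_pow_mul_choose hp hp1).tsum_eq, Phi_two]
  field_simp
  ring
end
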